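/- For all real α > -1/2, the sum ∑_{r=0}^∞ C(α,r) (-1)^r / (2r+1+m) equals (1/2)·Γ(α+1)Γ(m/2+1/2)/Γ(α+3/2+m/2), for every real m > -1, where C(α,r) = (1/r!)·∏_{j=0}^{r-1}(α-j) is the generalized binomial coefficient. -/

import Mathlib

/-!
On `(0, 1)` the binomial series gives `(1 - x) ^ α = ∑ C(α,r) (-1)^r x^r`. Multiplying by
`x ^ (s - 1)` with `s = (m + 1) / 2` and integrating termwise turns the sum into
`(1/2) ∑ C(α,r) (-1)^r / (r + s) = (1/2) B(s, α + 1)`, and the Beta integral is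
`Γ(s) Γ(α + 1) / Γ(s + α + 1)`.

Termwise integration needs `∑ |C(α,r)| / (r + s) < ∞`. For `r ≥ α` we have
`|C(α,r+1)| / |C(α,r)| = (r - α) / (r + 1)`, and when `α > -1/2` this makes
`|C(α,r)| √(r + 1)` nonincreasing, so the series is dominated by `∑ r ^ (-3/2)`.
-/

/-- Generalized binomial coefficient `C(α,r) = (1/r!)·∏_{j<r}(α-j)`. -/
noncomputable def genBinom (α : ℝ) (r : ℕ) : ℝ :=
  (∏ j ∈ Finset.range r, (α - j)) / (Nat.factorial r)

open Filter MeasureTheory Set Real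

theorem genBinom_eq_choose (α : ℝ) (r : ℕ) : genBinom α r = Ring.choose α r := by
  rw [Ring.choose_eq_smul, ← Polynomial.aeval_eq_smeval, Polynomial.aeval_def,
    Polynomial.eval₂_eq_eval_map, descPochhammer_map, descPochhammer_eval_eq_prod_range,
    genBinom, smul_eq_mul, div_eq_inv_mul]

theorem hasSum_genBinom_mul_neg_pow (α : ℝ) {x : ℝ} (hx : |x| < 1) :
    HasSum (fun r => genBinom α r * (-1) ^ r * x ^ r) ((1 - x) ^ α) := by
  have h := one_add_rpow_hasFPowerSeriesOnBall_zero (a := α).hasSum (y := -x)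
    (by simpa [Metric.mem_eball, edist_dist, dist_eq] using hx)
  rw [zero_add, ← sub_eq_add_neg] at h
  refine h.congr_fun fun r => ?_
  rw [binomialSeries_apply, List.prod_ofFn, Finset.prod_const, Finset.card_univ,
    Fintype.card_fin, genBinom_eq_choose, smul_eq_mul, neg_pow]
  ring

theorem genBinom_succ (α : ℝ) (r : ℕ) :
    genBinom α (r + 1) = genBinom α r * (α - r) / (r + 1) := by
  simp only [genBinom, Finset.prod_range_succ, Nat.factorial_succ]
  push_cast
  field_simp

theorem abs_genBinom_succ_mul_sqrt_le {α : ℝ} (hα : -1 / 2 < α) {r : ℕ} (hr : α ≤ r) :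
    |genBinom α (r + 1)| * √((r + 1 : ℕ) + 1) ≤ |genBinom α r| * √(r + 1) := by
  have hr1 : (0 : ℝ) < r + 1 := by positivity
  have key : (r - α) * √(r + 2) ≤ (r + 1) * √(r + 1) := by
    rw [← sq_le_sq₀ (by nlinarith [sqrt_nonneg (r + 2 : ℝ)]) (by positivity), mul_pow,
      mul_pow, sq_sqrt (by positivity), sq_sqrt hr1.le]
    have h : (r - α) ^ 2 ≤ (r + 1 / 2) ^ 2 := by nlinarith
    nlinarith [(r.cast_nonneg : (0 : ℝ) ≤ r)]
  rw [genBinom_succ, abs_div, abs_mul, abs_of_nonpos (sub_nonpos.mpr hr), abs_of_pos hr1,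
    div_mul_eq_mul_div, div_le_iff₀ hr1, neg_sub]
  push_cast
  rw [add_assoc, one_add_one_eq_two, mul_assoc, mul_assoc]
  exact mul_le_mul_of_nonneg_left (key.trans_eq (mul_comm _ _)) (abs_nonneg _)

theorem abs_genBinom_le_div_sqrt {α : ℝ} (hα : -1 / 2 < α) :
    ∃ K, ∀ᶠ r : ℕ in atTop, |genBinom α r| ≤ K / √(r + 1) := by
  refine ⟨|genBinom α ⌈α⌉₊| * √(⌈α⌉₊ + 1), eventually_atTop.mpr ⟨⌈α⌉₊, fun r hr => ?_⟩⟩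
  rw [le_div_iff₀ (by positivity)]
  induction r, hr using Nat.le_induction with
  | base => rfl
  | succ r hr ih =>
    have hαr : α ≤ r := (Nat.le_ceil α).trans (by exact_mod_cast hr)
    exact (abs_genBinom_succ_mul_sqrt_le hα hαr).trans ih

theorem summable_abs_genBinom_div_add {α : ℝ} (hα : -1 / 2 < α) (s : ℝ) :
    Summable fun r : ℕ => |genBinom α r| / (r + s) := by
  obtain ⟨K, hK⟩ := abs_genBinom_le_div_sqrt hα
  have hg : Summable fun r : ℕ => 2 * K * ((r : ℝ) + 1) ^ (-(3 / 2) : ℝ) := by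
    refine .mul_left _ ?_
    exact_mod_cast (summable_nat_add_iff 1).mpr (summable_nat_rpow.mpr (by norm_num))
  refine hg.of_norm_bounded_eventually_nat ?_
  filter_upwards [hK, eventually_ge_atTop ⌈1 - 2 * s⌉₊] with r hCr hr
  have hr1 : (0 : ℝ) < r + 1 := by positivity
  have hrs : (r + 1) / 2 ≤ r + s := by linarith [Nat.le_of_ceil_le hr]
  rw [norm_div, norm_eq_abs, norm_eq_abs, abs_abs, abs_of_pos (a := (r : ℝ) + s) (by linarith)]
  calc |genBinom α r| / (r + s) ≤ K / √(r + 1) / ((r + 1) / 2) :=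
        div_le_div₀ ((abs_nonneg _).trans hCr) hCr (by positivity) hrs
    _ = 2 * K * ((r : ℝ) + 1) ^ (-(3 / 2) : ℝ) := by
        rw [show (-(3 / 2) : ℝ) = -1 + -(1 / 2) by norm_num, rpow_add hr1, rpow_neg_one,
          rpow_neg hr1.le, ← sqrt_eq_rpow]
        field_simp

theorem integral_Ioo_rpow {q : ℝ} (hq : -1 < q) :
    ∫ x in Ioo (0 : ℝ) 1, x ^ q = 1 / (q + 1) := by
  rw [← integral_Ioc_eq_integral_Ioo, ← intervalIntegral.integral_of_le zero_le_one,
    integral_rpow (.inl hq), one_rpow, zero_rpow (by linarith), sub_zero]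

theorem integrableOn_Ioo_rpow {q : ℝ} (hq : -1 < q) :
    IntegrableOn (fun x : ℝ => x ^ q) (Ioo 0 1) :=
  (intervalIntegral.intervalIntegrable_rpow' hq).1.mono_set Ioo_subset_Ioc_self

theorem integral_Ioo_rpow_mul_one_sub_rpow_eq_tsum {α : ℝ} (hα : -1 / 2 < α) {s : ℝ}
    (hs : 0 < s) :
    ∫ x in Ioo (0 : ℝ) 1, x ^ (s - 1) * (1 - x) ^ α =
      ∑' r : ℕ, genBinom α r * (-1) ^ r / (r + s) := by
  set F : ℕ → ℝ → ℝ := fun r x => genBinom α r * (-1) ^ r * x ^ ((r : ℝ) + s - 1)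
  have hexp (r : ℕ) : -1 < (r : ℝ) + s - 1 := by linarith [r.cast_nonneg (α := ℝ)]
  have hint (r : ℕ) :
      ∫ x in Ioo (0 : ℝ) 1, F r x = genBinom α r * (-1) ^ r / (r + s) := by
    rw [integral_const_mul, integral_Ioo_rpow (hexp r), sub_add_cancel, mul_one_div]
  have hint_norm (r : ℕ) : ∫ x in Ioo (0 : ℝ) 1, ‖F r x‖ = |genBinom α r| / (r + s) := by
    have habs : ∀ x ∈ Ioo (0 : ℝ) 1, ‖F r x‖ = |genBinom α r| * x ^ ((r : ℝ) + s - 1) := by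
      intro x hx
      simp [F, abs_of_pos (rpow_pos_of_pos hx.1 _)]
    rw [setIntegral_congr_fun measurableSet_Ioo habs, integral_const_mul,
      integral_Ioo_rpow (hexp r), sub_add_cancel, mul_one_div]
  have hsum (x : ℝ) (hx : x ∈ Ioo (0 : ℝ) 1) : ∑' r, F r x = x ^ (s - 1) * (1 - x) ^ α := by
    have hF (r : ℕ) : F r x = x ^ (s - 1) * (genBinom α r * (-1) ^ r * x ^ r) := by
      dsimp only [F]
      rw [add_sub_assoc, rpow_add hx.1, rpow_natCast]
      ring
    rw [tsum_congr hF, tsum_mul_left,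
      (hasSum_genBinom_mul_neg_pow α (abs_lt.mpr ⟨by linarith [hx.1], hx.2⟩)).tsum_eq]
  rw [← setIntegral_congr_fun measurableSet_Ioo hsum,
    ← integral_tsum_of_summable_integral_norm
      (fun r => (integrableOn_Ioo_rpow (hexp r)).const_mul _)
      ((summable_abs_genBinom_div_add hα s).congr fun r => (hint_norm r).symm)]
  exact tsum_congr hint

theorem integral_Ioo_rpow_mul_one_sub_rpow {u v : ℝ} (hu : 0 < u) (hv : 0 < v) :
    ∫ x in Ioo (0 : ℝ) 1, x ^ (u - 1) * (1 - x) ^ (v - 1) =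
      Gamma u * Gamma v / Gamma (u + v) := by
  rw [← ProbabilityTheory.beta, ProbabilityTheory.beta_eq_betaIntegralReal u v hu hv,
    Complex.betaIntegral, intervalIntegral.integral_of_le zero_le_one,
    integral_Ioc_eq_integral_Ioo, ← RCLike.re_to_complex, ← integral_re]
  · refine setIntegral_congr_fun measurableSet_Ioo fun x hx => ?_
    norm_cast
    rw [← Complex.ofReal_cpow hx.1.le, ← Complex.ofReal_cpow (by linarith [hx.2]),
      RCLike.re_to_complex, ← Complex.ofReal_mul, Complex.ofReal_re]
  · have := Complex.betaIntegral_convergent (u := u) (v := v) (by simpa) (by simpa)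
    rw [intervalIntegrable_iff_integrableOn_Ioc_of_le zero_le_one] at this
    exact this.mono_set Ioo_subset_Ioc_self

theorem stmt0 (α : ℝ) (hα : α > -1/2) (m : ℝ) (hm : m > -1) :
    ∑' r : ℕ, genBinom α r * (-1) ^ r / (2 * r + 1 + m) =
      (1 / 2) * Real.Gamma (α + 1) * Real.Gamma (m / 2 + 1 / 2) /
        Real.Gamma (α + 3 / 2 + m / 2) := by
  have hs : 0 < m / 2 + 1 / 2 := by linarith
  have hterm (r : ℕ) : genBinom α r * (-1) ^ r / (2 * r + 1 + m) =
      1 / 2 * (genBinom α r * (-1) ^ r / (r + (m / 2 + 1 / 2))) := by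
    field_simp
    ring
  have hbeta := integral_Ioo_rpow_mul_one_sub_rpow hs (v := α + 1) (by linarith)
  rw [add_sub_cancel_right, integral_Ioo_rpow_mul_one_sub_rpow_eq_tsum hα hs] at hbeta
  rw [tsum_congr hterm, tsum_mul_left, hbeta,
    show m / 2 + 1 / 2 + (α + 1) = α + 3 / 2 + m / 2 by ring]
  ring
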